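/- Suppose there exists a reconfiguration sequence ρ of length 2m(n+2) from p_b to p_e in G_φ. Then for every level i ∈ {1, …, n}, some path in ρ contains a gadget vertex of level i, and all gadget vertices of level i contained in paths of ρ have the same v-state. -/

import Mathlib

/-- Vertices of the graph `G_φ` (for a CNF formula with `n` variables and `m` clauses):
`s`, `t`, the vertices `beg_{j+1}` and `end_{j+1}` (for `j : Fin (2m)`), and the gadget
vertices `v(i+1, vs, cs, j+1)` (for `i : Fin n`, `vs cs : Bool`, `j : Fin (2m)`).
An index `i : Fin n` encodes level `i+1`, and `j : Fin (2m)` encodes depth `j+1`. -/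
inductive PVert (n m : ℕ) : Type where
  | s : PVert n m
  | t : PVert n m
  | beg (j : Fin (2 * m)) : PVert n m
  | en (j : Fin (2 * m)) : PVert n m
  | v (i : Fin n) (vs : Bool) (cs : Bool) (j : Fin (2 * m)) : PVert n m
deriving DecidableEq

/-- The depth of a vertex of `G_φ`. -/
def PVert.depth {n m : ℕ} : PVert n m → ℕ
  | PVert.s => 0
  | PVert.t => 2 * m + 1
  | PVert.beg j => (j : ℕ) + 1
  | PVert.en j => (j : ℕ) + 1
  | PVert.v _ _ _ j => (j : ℕ) + 1

/-- The level of a vertex of `G_φ` (`beg`-vertices have level `0`, `end`-vertices have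
level `n+1`, the gadget vertex `v(i,vs,cs,j)` has level `i`; junk value `0` for `s`,`t`). -/
def PVert.level {n m : ℕ} : PVert n m → ℕ
  | PVert.beg _ => 0
  | PVert.en _ => n + 1
  | PVert.v i _ _ _ => (i : ℕ) + 1
  | _ => 0

/-- The c-state of a vertex of `G_φ` (`beg`-vertices have c-state `0`, `end`-vertices have
c-state `1`, the gadget vertex `v(i,vs,cs,j)` has c-state `cs`; junk value `0` for `s`,`t`). -/
def PVert.cstate {n m : ℕ} : PVert n m → ℕ
  | PVert.beg _ => 0
  | PVert.en _ => 1
  | PVert.v _ _ cs _ => cond cs 1 0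
  | _ => 0

/-- The (directed) edges of `G_φ`.  The CNF formula `φ` is recorded by its clauses:
`(i, vs) ∈ φ jc` means that clause `C_{jc+1}` contains the literal asserting `x_{i+1} = vs`,
i.e. that setting `x_{i+1} = vs` satisfies clause `C_{jc+1}`. -/
def PEdge (n m : ℕ) (φ : Fin m → Finset (Fin n × Bool)) (a b : PVert n m) : Prop :=
  -- (a) gadget edges, same c-state: from depth j to depth j+1 inside a gadget
  (∃ (i : Fin n) (vs cs : Bool) (j j' : Fin (2 * m)), (j' : ℕ) = (j : ℕ) + 1 ∧
      a = PVert.v i vs cs j ∧ b = PVert.v i vs cs j') ∨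
  -- (a) gadget edges, crossing: from even depth 2j to odd depth 2j+1, flipping the c-state
  (∃ (i : Fin n) (vs cs : Bool) (j j' : Fin (2 * m)), (j' : ℕ) = (j : ℕ) + 1 ∧
      (j : ℕ) % 2 = 1 ∧ a = PVert.v i vs cs j ∧ b = PVert.v i vs (!cs) j') ∨
  -- (b) formula edges: from v(i,vs,1,2jc-1) to v(i,vs,0,2jc) when x_i = vs satisfies C_jc
  (∃ (i : Fin n) (vs : Bool) (j j' : Fin (2 * m)) (jc : Fin m), (j' : ℕ) = (j : ℕ) + 1 ∧
      (j : ℕ) = 2 * (jc : ℕ) ∧ (i, vs) ∈ φ jc ∧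
      a = PVert.v i vs true j ∧ b = PVert.v i vs false j') ∨
  -- (c) inter-level edges, same c-state: from level i+1, depth j-1 to level i, depth j
  (∃ (ihi ilo : Fin n) (vs' vs cs : Bool) (j j' : Fin (2 * m)), (ihi : ℕ) = (ilo : ℕ) + 1 ∧
      (j' : ℕ) = (j : ℕ) + 1 ∧ a = PVert.v ihi vs' cs j ∧ b = PVert.v ilo vs cs j') ∨
  -- (c) inter-level edges, crossing: from level i+1, even depth 2j to level i, depth 2j+1
  (∃ (ihi ilo : Fin n) (vs' vs cs : Bool) (j j' : Fin (2 * m)), (ihi : ℕ) = (ilo : ℕ) + 1 ∧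
      (j' : ℕ) = (j : ℕ) + 1 ∧ (j : ℕ) % 2 = 1 ∧
      a = PVert.v ihi vs' cs j ∧ b = PVert.v ilo vs (!cs) j') ∨
  -- (d) the begin path
  (∃ (j j' : Fin (2 * m)), (j' : ℕ) = (j : ℕ) + 1 ∧ a = PVert.beg j ∧ b = PVert.beg j') ∨
  -- (d) the end path
  (∃ (j j' : Fin (2 * m)), (j' : ℕ) = (j : ℕ) + 1 ∧ a = PVert.en j ∧ b = PVert.en j') ∨
  -- (d) from v(1,vs,0,j) to beg_{j+1}
  (∃ (i : Fin n) (vs : Bool) (j j' : Fin (2 * m)), (i : ℕ) = 0 ∧ (j' : ℕ) = (j : ℕ) + 1 ∧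
      a = PVert.v i vs false j ∧ b = PVert.beg j') ∨
  -- (d) from end_j to v(n,vs,1,j+1)
  (∃ (i : Fin n) (vs : Bool) (j j' : Fin (2 * m)), (i : ℕ) + 1 = n ∧ (j' : ℕ) = (j : ℕ) + 1 ∧
      a = PVert.en j ∧ b = PVert.v i vs true j') ∨
  -- edges from s to every vertex of depth 1
  (a = PVert.s ∧ b.depth = 1) ∨
  -- edges from every vertex of depth 2m to t
  (a.depth = 2 * m ∧ b = PVert.t)

/-- A shortest `(s,t)`-path in `G_φ`: a directed path from `s` to `t` with `2m+2` vertices,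
one vertex of each depth `0, 1, …, 2m+1`. -/
def IsStPath (n m : ℕ) (φ : Fin m → Finset (Fin n × Bool))
    (p : Fin (2 * m + 1 + 1) → PVert n m) : Prop :=
  p 0 = PVert.s ∧ p (Fin.last (2 * m + 1)) = PVert.t ∧
    (∀ i : Fin (2 * m + 1), PEdge n m φ (p i.castSucc) (p i.succ)) ∧
    (∀ d : Fin (2 * m + 1 + 1), (p d).depth = (d : ℕ))

/-- Two vertex sequences differ in exactly one position. -/
def DiffOne {N : ℕ} {α : Type*} (p q : Fin N → α) : Prop :=
  ∃ i, p i ≠ q i ∧ ∀ j, j ≠ i → p j = q j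

/-- `ρ 0, ρ 1, …, ρ ℓ` is a reconfiguration sequence of length `ℓ` from the shortest
`(s,t)`-path `p` to the shortest `(s,t)`-path `q` in `G_φ`. -/
def PReconfSeq (n m : ℕ) (φ : Fin m → Finset (Fin n × Bool))
    (ρ : ℕ → (Fin (2 * m + 1 + 1) → PVert n m)) (ℓ : ℕ)
    (p q : Fin (2 * m + 1 + 1) → PVert n m) : Prop :=
  ρ 0 = p ∧ ρ ℓ = q ∧ (∀ i ≤ ℓ, IsStPath n m φ (ρ i)) ∧
    ∀ i < ℓ, DiffOne (ρ i) (ρ (i + 1))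

/-- The path `p_b = (s, beg_1, …, beg_{2m}, t)`. -/
def pbP (n m : ℕ) : Fin (2 * m + 1 + 1) → PVert n m := fun d =>
  if h0 : (d : ℕ) = 0 then PVert.s
  else if h1 : (d : ℕ) ≤ 2 * m then PVert.beg ⟨(d : ℕ) - 1, by omega⟩
  else PVert.t

/-- The path `p_e = (s, end_1, …, end_{2m}, t)`. -/
def peP (n m : ℕ) : Fin (2 * m + 1 + 1) → PVert n m := fun d =>
  if h0 : (d : ℕ) = 0 then PVert.s
  else if h1 : (d : ℕ) ≤ 2 * m then PVert.en ⟨(d : ℕ) - 1, by omega⟩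
  else PVert.t

/-!
The potential of a vertex is its level plus its c-state, and the potential of a shortest path
is the sum over its vertices: it is `0` on `p_b` and `2m(n+2)` on `p_e`. Along an edge leaving
a vertex of odd depth the potential drops by `0` or `1`, and a vertex changed by a
reconfiguration step shares an odd-depth neighbor with its replacement (its left neighbor if
its depth is even, its right one if odd), so a step raises the potential by at most one. In a
sequence of length exactly `2m(n+2)` every step therefore raises it by exactly one: the changed
vertex either climbs one level, or stays in its gadget and switches its c-state from `0` to `1`.
So at a fixed position levels only grow and a level, once reached, keeps its v-state, while a
vertex climbing to level `i` at depth `d ≥ 2` copies the v-state of its left neighbor, which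
is already at level `i`. By induction on the depth, every gadget vertex of level `i` has the
v-state of the ones at depth `1`.
-/

theorem Nat.exists_eq_and_succ_eq_of_succ_le {f : ℕ → ℕ} {t k : ℕ}
    (hstep : ∀ s < t, f (s + 1) ≤ f s + 1) (h0 : f 0 ≤ k) (ht : k < f t) :
    ∃ s < t, f s = k ∧ f (s + 1) = k + 1 := by
  induction t with
  | zero => omega
  | succ t ih =>
    by_cases hk : k < f t
    · obtain ⟨s, hs, h⟩ := ih (fun s hs => hstep s (by omega)) hk
      exact ⟨s, by omega, h⟩
    · have := hstep t (by omega)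
      exact ⟨t, by omega, by omega, by omega⟩

theorem Nat.succ_eq_of_succ_le_of_add_le {f : ℕ → ℕ} {ℓ : ℕ}
    (hstep : ∀ t < ℓ, f (t + 1) ≤ f t + 1) (hℓ : f 0 + ℓ ≤ f ℓ) :
    ∀ t < ℓ, f (t + 1) = f t + 1 := by
  have hle : ∀ t s, t ≤ s → s ≤ ℓ → f s ≤ f t + (s - t) := by
    intro t s hts
    induction s, hts using Nat.le_induction with
    | base => simp
    | succ s hts ih =>
      intro hs
      have := hstep s (by omega)
      have := ih (by omega)
      omega
  intro t ht
  have := hle 0 t (by omega) (by omega)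
  have := hle (t + 1) ℓ (by omega) le_rfl
  have := hstep t ht
  omega

theorem Fintype.sum_add_apply_eq_of_eq_of_ne {ι M : Type*} [Fintype ι] [DecidableEq ι]
    [AddCommMonoid M] {f g : ι → M} {d : ι} (h : ∀ e, e ≠ d → f e = g e) :
    ∑ e, g e + f d = ∑ e, f e + g d := by
  have hcompl : ∑ e ∈ {d}ᶜ, g e = ∑ e ∈ {d}ᶜ, f e :=
    Finset.sum_congr rfl fun e he => (h e (by simpa using he)).symm
  rw [Fintype.sum_eq_add_sum_compl d g, Fintype.sum_eq_add_sum_compl d f, hcompl]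
  abel

theorem DiffOne.apply_eq_of_apply_ne {N : ℕ} {α : Type*} {p q : Fin N → α} (h : DiffOne p q)
    {d : Fin N} (hd : p d ≠ q d) : ∀ e, e ≠ d → p e = q e := by
  obtain ⟨i, -, hi⟩ := h
  obtain rfl : d = i := by
    by_contra hdi
    exact hd (hi d hdi)
  exact hi

namespace PVert

variable {n m : ℕ}

def vstate : PVert n m → Bool
  | v _ vs _ _ => vs
  | _ => false

def potential (u : PVert n m) : ℕ := u.level + u.cstate

theorem cstate_le_one (u : PVert n m) : u.cstate ≤ 1 := by
  cases u with
  | v _ _ cs _ => cases cs <;> simp [cstate]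
  | _ => simp [cstate]

theorem exists_eq_v_of_level_eq {u : PVert n m} (i : Fin n) (h : u.level = i + 1) :
    ∃ vs cs j, u = v i vs cs j := by
  cases u with
  | v i' vs cs j => exact ⟨vs, cs, j, by simp [level] at h; simp [Fin.ext h]⟩
  | en => simp [level] at h; omega
  | _ => simp [level] at h

end PVert

namespace PEdge

variable {n m : ℕ} {φ : Fin m → Finset (Fin n × Bool)} {a b : PVert n m}

theorem level_le (h : PEdge n m φ a b) (ha : a ≠ PVert.s) (hb : b ≠ PVert.t) :
    b.level ≤ a.level ∧ a.level ≤ b.level + 1 := by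
  unfold PEdge at h
  casesm* _ ∨ _, Exists _, _ ∧ _ <;> subst_vars <;> simp_all [PVert.level]

theorem vstate_eq_of_level_eq (h : PEdge n m φ a b) (ha : a ≠ PVert.s) (hb : b ≠ PVert.t)
    (hl : a.level = b.level) : a.vstate = b.vstate := by
  unfold PEdge at h
  casesm* _ ∨ _, Exists _, _ ∧ _ <;> subst_vars <;> simp_all [PVert.level, PVert.vstate]

theorem of_odd_depth (h : PEdge n m φ a b) (hodd : Odd a.depth) (ha : a ≠ PVert.s)
    (hb : b ≠ PVert.t) :
    (b.level = a.level ∧ b.cstate ≤ a.cstate) ∨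
      (b.level + 1 = a.level ∧ b.cstate = a.cstate) := by
  rw [Nat.odd_iff] at hodd
  unfold PEdge at h
  casesm* _ ∨ _, Exists _, _ ∧ _ <;> subst_vars <;>
    simp_all [PVert.level, PVert.cstate, PVert.depth] <;> omega

theorem potential_le_of_odd_depth (h : PEdge n m φ a b) (hodd : Odd a.depth)
    (ha : a ≠ PVert.s) (hb : b ≠ PVert.t) :
    b.potential ≤ a.potential ∧ a.potential ≤ b.potential + 1 := by
  have := a.cstate_le_one
  rcases h.of_odd_depth hodd ha hb with ⟨hl, hc⟩ | ⟨hl, hc⟩ <;>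
    simp only [PVert.potential] <;> omega

end PEdge

namespace IsStPath

variable {n m : ℕ} {φ : Fin m → Finset (Fin n × Bool)}
  {p q : Fin (2 * m + 1 + 1) → PVert n m}

theorem depth_eq (hp : IsStPath n m φ p) (d : Fin (2 * m + 1 + 1)) : (p d).depth = d :=
  hp.2.2.2 d

theorem ne_s (hp : IsStPath n m φ p) {d : Fin (2 * m + 1 + 1)} (hd : 1 ≤ (d : ℕ)) :
    p d ≠ PVert.s := by
  intro h
  have := hp.depth_eq d
  simp only [h, PVert.depth] at this
  omega

theorem ne_t (hp : IsStPath n m φ p) {d : Fin (2 * m + 1 + 1)} (hd : (d : ℕ) ≤ 2 * m) :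
    p d ≠ PVert.t := by
  intro h
  have := hp.depth_eq d
  simp only [h, PVert.depth] at this
  omega

theorem edge (hp : IsStPath n m φ p) {e d : Fin (2 * m + 1 + 1)} (hed : (d : ℕ) = e + 1) :
    PEdge n m φ (p e) (p d) := by
  have h := hp.2.2.1 ⟨e, by omega⟩
  rwa [show Fin.castSucc ⟨e, _⟩ = e from rfl,
    show Fin.succ ⟨(e : ℕ), _⟩ = d from Fin.ext hed.symm] at h

theorem interior_of_level_pos (hp : IsStPath n m φ p) {d : Fin (2 * m + 1 + 1)}
    (hl : 0 < (p d).level) : 1 ≤ (d : ℕ) ∧ (d : ℕ) ≤ 2 * m := by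
  constructor
  · by_contra h
    rw [show d = 0 from Fin.ext (by simp only [Fin.val_zero]; omega), hp.1] at hl
    exact lt_irrefl 0 hl
  · by_contra h
    rw [show d = Fin.last (2 * m + 1) from Fin.ext (by simp only [Fin.val_last]; omega),
      hp.2.1] at hl
    exact lt_irrefl 0 hl

theorem interior_of_ne (hp : IsStPath n m φ p) (hq : IsStPath n m φ q)
    {d : Fin (2 * m + 1 + 1)} (hne : p d ≠ q d) : 1 ≤ (d : ℕ) ∧ (d : ℕ) ≤ 2 * m := by
  constructor
  · by_contra h
    obtain rfl : d = 0 := Fin.ext (by simp only [Fin.val_zero]; omega)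
    exact hne (hp.1.trans hq.1.symm)
  · by_contra h
    obtain rfl : d = Fin.last (2 * m + 1) := Fin.ext (by simp only [Fin.val_last]; omega)
    exact hne (hp.2.1.trans hq.2.1.symm)

variable {d : Fin (2 * m + 1 + 1)}

theorem exists_common_odd_neighbor (hp : IsStPath n m φ p) (hq : IsStPath n m φ q)
    (hag : ∀ e, e ≠ d → p e = q e) (hd1 : 1 ≤ (d : ℕ)) (hd2 : (d : ℕ) ≤ 2 * m) :
    (∃ x, x ≠ PVert.s ∧ Odd x.depth ∧ PEdge n m φ x (p d) ∧ PEdge n m φ x (q d)) ∨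
      (Odd (p d).depth ∧ Odd (q d).depth ∧
        ∃ y, y ≠ PVert.t ∧ PEdge n m φ (p d) y ∧ PEdge n m φ (q d) y) := by
  rcases Nat.even_or_odd d with hev | hodd
  · have hd : 2 ≤ (d : ℕ) := by rcases hev with ⟨k, hk⟩; omega
    let e : Fin (2 * m + 1 + 1) := ⟨d - 1, by omega⟩
    have hed : (d : ℕ) = e + 1 := by simp only [e]; omega
    have hqe : q e = p e := (hag e (Fin.ne_of_val_ne (by omega))).symm
    refine Or.inl ⟨p e, hp.ne_s (by simp only [e]; omega), ?_, hp.edge hed, hqe ▸ hq.edge hed⟩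
    rw [hp.depth_eq, Nat.odd_iff]
    rcases hev with ⟨k, hk⟩
    simp only [e]
    omega
  · have hd : (d : ℕ) + 1 ≤ 2 * m := by rcases hodd with ⟨k, hk⟩; omega
    let e : Fin (2 * m + 1 + 1) := ⟨d + 1, by omega⟩
    have hqe : q e = p e := (hag e (Fin.ne_of_val_ne (by simp only [e]; omega))).symm
    refine Or.inr ⟨hp.depth_eq d ▸ hodd, hq.depth_eq d ▸ hodd, p e, hp.ne_t hd,
      hp.edge rfl, hqe ▸ hq.edge rfl⟩

theorem potential_le_succ_of_agree (hp : IsStPath n m φ p) (hq : IsStPath n m φ q)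
    (hag : ∀ e, e ≠ d → p e = q e) (hd1 : 1 ≤ (d : ℕ)) (hd2 : (d : ℕ) ≤ 2 * m) :
    (q d).potential ≤ (p d).potential + 1 := by
  rcases exists_common_odd_neighbor hp hq hag hd1 hd2 with
    ⟨x, hx, hodd, hxu, hxw⟩ | ⟨hoddu, hoddw, y, hy, huy, hwy⟩
  · have := hxu.potential_le_of_odd_depth hodd hx (hp.ne_t hd2)
    have := hxw.potential_le_of_odd_depth hodd hx (hq.ne_t hd2)
    omega
  · have := huy.potential_le_of_odd_depth hoddu (hp.ne_s hd1) hy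
    have := hwy.potential_le_of_odd_depth hoddw (hq.ne_s hd1) hy
    omega

theorem level_le_succ_of_agree (hp : IsStPath n m φ p) (hq : IsStPath n m φ q)
    (hag : ∀ e, e ≠ d → p e = q e) (hd1 : 1 ≤ (d : ℕ)) (hd2 : (d : ℕ) ≤ 2 * m) :
    (q d).level ≤ (p d).level + 1 := by
  rcases exists_common_odd_neighbor hp hq hag hd1 hd2 with
    ⟨x, hx, -, hxu, hxw⟩ | ⟨-, -, y, hy, huy, hwy⟩
  · have := hxu.level_le hx (hp.ne_t hd2)
    have := hxw.level_le hx (hq.ne_t hd2)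
    omega
  · have := huy.level_le (hp.ne_s hd1) hy
    have := hwy.level_le (hq.ne_s hd1) hy
    omega

theorem vstate_eq_of_agree_of_cstate_ne (hp : IsStPath n m φ p) (hq : IsStPath n m φ q)
    (hag : ∀ e, e ≠ d → p e = q e) (hd1 : 1 ≤ (d : ℕ)) (hd2 : (d : ℕ) ≤ 2 * m)
    (hl : (q d).level = (p d).level) (hc : (q d).cstate ≠ (p d).cstate) :
    (q d).vstate = (p d).vstate := by
  -- A level change along an odd-depth edge preserves the c-state, so both vertices are at the
  -- level of their common neighbor, whose v-state they then share.
  rcases exists_common_odd_neighbor hp hq hag hd1 hd2 with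
    ⟨x, hx, hodd, hxu, hxw⟩ | ⟨hoddu, hoddw, y, hy, huy, hwy⟩
  · have hxl : x.level = (p d).level := by
      rcases hxu.of_odd_depth hodd hx (hp.ne_t hd2) with h | h <;>
        rcases hxw.of_odd_depth hodd hx (hq.ne_t hd2) with h' | h' <;> omega
    rw [← hxw.vstate_eq_of_level_eq hx (hq.ne_t hd2) (hxl.trans hl.symm),
      hxu.vstate_eq_of_level_eq hx (hp.ne_t hd2) hxl]
  · have hyl : (p d).level = y.level := by
      rcases huy.of_odd_depth hoddu (hp.ne_s hd1) hy with h | h <;>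
        rcases hwy.of_odd_depth hoddw (hq.ne_s hd1) hy with h' | h' <;> omega
    rw [hwy.vstate_eq_of_level_eq (hq.ne_s hd1) hy (hl.trans hyl),
      huy.vstate_eq_of_level_eq (hp.ne_s hd1) hy hyl]

theorem level_vstate_left_eq_of_level_succ (hp : IsStPath n m φ p) (hq : IsStPath n m φ q)
    (hag : ∀ e, e ≠ d → p e = q e) (hd2 : (d : ℕ) ≤ 2 * m) {e : Fin (2 * m + 1 + 1)}
    (he : 1 ≤ (e : ℕ)) (hed : (d : ℕ) = e + 1) (hl : (q d).level = (p d).level + 1) :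
    (p e).level = (q d).level ∧ (p e).vstate = (q d).vstate := by
  have hxw : PEdge n m φ (p e) (q d) := hag e (Fin.ne_of_val_ne (by omega)) ▸ hq.edge hed
  have := (hp.edge hed).level_le (hp.ne_s he) (hp.ne_t hd2)
  have := hxw.level_le (hp.ne_s he) (hq.ne_t hd2)
  have hxl : (p e).level = (q d).level := by omega
  exact ⟨hxl, hxw.vstate_eq_of_level_eq (hp.ne_s he) (hq.ne_t hd2) hxl⟩

end IsStPath

section Potential

variable {n m : ℕ} {φ : Fin m → Finset (Fin n × Bool)}

def pathPotential (p : Fin (2 * m + 1 + 1) → PVert n m) : ℕ := ∑ d, (p d).potential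

theorem level_pbP (d : Fin (2 * m + 1 + 1)) : (pbP n m d).level = 0 := by
  unfold pbP
  split_ifs <;> rfl

theorem level_peP {d : Fin (2 * m + 1 + 1)} (hd1 : 1 ≤ (d : ℕ)) (hd2 : (d : ℕ) ≤ 2 * m) :
    (peP n m d).level = n + 1 := by
  rw [peP, dif_neg (by omega), dif_pos hd2]
  rfl

theorem pathPotential_pbP : pathPotential (pbP n m) = 0 := by
  refine Finset.sum_eq_zero fun d _ => ?_
  unfold pbP PVert.potential
  split_ifs <;> rfl

theorem pathPotential_peP : pathPotential (peP n m) = 2 * m * (n + 2) := by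
  rw [pathPotential, Fin.sum_univ_succ, Fin.sum_univ_castSucc]
  have hint : ∀ d : Fin (2 * m), (peP n m d.castSucc.succ).potential = n + 2 := fun d => by
    simp only [peP, Fin.val_succ, Fin.val_castSucc]
    rw [dif_neg (by omega), dif_pos (by omega)]
    rfl
  simp only [hint, Finset.sum_const, Finset.card_univ, Fintype.card_fin, smul_eq_mul]
  simp [peP, PVert.potential, PVert.level, PVert.cstate]

theorem pathPotential_add_potential {p q : Fin (2 * m + 1 + 1) → PVert n m}
    {d : Fin (2 * m + 1 + 1)} (hag : ∀ e, e ≠ d → p e = q e) :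
    pathPotential q + (p d).potential = pathPotential p + (q d).potential :=
  Fintype.sum_add_apply_eq_of_eq_of_ne (f := fun e => (p e).potential)
    (g := fun e => (q e).potential) fun e he => by rw [hag e he]

theorem pathPotential_le_succ {p q : Fin (2 * m + 1 + 1) → PVert n m} (hp : IsStPath n m φ p)
    (hq : IsStPath n m φ q) (hpq : DiffOne p q) : pathPotential q ≤ pathPotential p + 1 := by
  obtain ⟨d, hne, hag⟩ := hpq
  obtain ⟨hd1, hd2⟩ := hp.interior_of_ne hq hne
  have := pathPotential_add_potential hag
  have := hp.potential_le_succ_of_agree hq hag hd1 hd2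
  omega

end Potential

namespace PReconfSeq

variable {n m : ℕ} {φ : Fin m → Finset (Fin n × Bool)}
  {ρ : ℕ → Fin (2 * m + 1 + 1) → PVert n m}

theorem isStPath {ℓ : ℕ} {p q : Fin (2 * m + 1 + 1) → PVert n m}
    (hρ : PReconfSeq n m φ ρ ℓ p q) {t : ℕ} (ht : t ≤ ℓ) : IsStPath n m φ (ρ t) :=
  hρ.2.2.1 t ht

theorem diffOne {ℓ : ℕ} {p q : Fin (2 * m + 1 + 1) → PVert n m}
    (hρ : PReconfSeq n m φ ρ ℓ p q) {t : ℕ} (ht : t < ℓ) : DiffOne (ρ t) (ρ (t + 1)) :=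
  hρ.2.2.2 t ht

theorem pathPotential_succ (hρ : PReconfSeq n m φ ρ (2 * m * (n + 2)) (pbP n m) (peP n m))
    {t : ℕ} (ht : t < 2 * m * (n + 2)) :
    pathPotential (ρ (t + 1)) = pathPotential (ρ t) + 1 := by
  refine Nat.succ_eq_of_succ_le_of_add_le (f := fun t => pathPotential (ρ t)) (fun t ht => ?_)
    (by simp only [hρ.1, hρ.2.1, pathPotential_pbP, pathPotential_peP, zero_add, le_rfl]) t ht
  exact pathPotential_le_succ (hρ.isStPath ht.le) (hρ.isStPath ht) (hρ.diffOne ht)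

theorem level_succ_or_vstate_eq (hρ : PReconfSeq n m φ ρ (2 * m * (n + 2)) (pbP n m) (peP n m))
    {t : ℕ} (ht : t < 2 * m * (n + 2)) (d : Fin (2 * m + 1 + 1)) :
    (ρ (t + 1) d).level = (ρ t d).level + 1 ∨
      ((ρ (t + 1) d).level = (ρ t d).level ∧ (ρ (t + 1) d).vstate = (ρ t d).vstate) := by
  by_cases hne : ρ t d = ρ (t + 1) d
  · exact Or.inr ⟨by rw [hne], by rw [hne]⟩
  have hp := hρ.isStPath ht.le
  have hq := hρ.isStPath (t := t + 1) ht
  have hag := (hρ.diffOne ht).apply_eq_of_apply_ne hne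
  obtain ⟨hd1, hd2⟩ := hp.interior_of_ne hq hne
  have hsum := pathPotential_add_potential hag
  have := hρ.pathPotential_succ ht
  have := hp.level_le_succ_of_agree hq hag hd1 hd2
  have := (ρ t d).cstate_le_one
  have := (ρ (t + 1) d).cstate_le_one
  simp only [PVert.potential] at hsum
  by_cases hl : (ρ (t + 1) d).level = (ρ t d).level
  · exact Or.inr ⟨hl, hp.vstate_eq_of_agree_of_cstate_ne hq hag hd1 hd2 hl (by omega)⟩
  · left
    omega

theorem level_le_level_succ (hρ : PReconfSeq n m φ ρ (2 * m * (n + 2)) (pbP n m) (peP n m))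
    {t : ℕ} (ht : t < 2 * m * (n + 2)) (d : Fin (2 * m + 1 + 1)) :
    (ρ t d).level ≤ (ρ (t + 1) d).level ∧ (ρ (t + 1) d).level ≤ (ρ t d).level + 1 := by
  rcases hρ.level_succ_or_vstate_eq ht d with h | ⟨h, -⟩ <;> omega

theorem level_mono (hρ : PReconfSeq n m φ ρ (2 * m * (n + 2)) (pbP n m) (peP n m))
    (d : Fin (2 * m + 1 + 1)) {s t : ℕ} (hst : s ≤ t) (ht : t ≤ 2 * m * (n + 2)) :
    (ρ s d).level ≤ (ρ t d).level := by
  induction t, hst using Nat.le_induction with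
  | base => rfl
  | succ t hst ih => exact (ih (by omega)).trans (hρ.level_le_level_succ (t := t) (by omega) d).1

theorem vstate_eq_of_level_eq_of_le
    (hρ : PReconfSeq n m φ ρ (2 * m * (n + 2)) (pbP n m) (peP n m))
    (d : Fin (2 * m + 1 + 1)) {s t : ℕ} (hst : s ≤ t) (ht : t ≤ 2 * m * (n + 2))
    (hl : (ρ s d).level = (ρ t d).level) : (ρ s d).vstate = (ρ t d).vstate := by
  induction t, hst using Nat.le_induction with
  | base => rfl
  | succ t hst ih =>
    have := hρ.level_mono d hst (by omega)
    have := (hρ.level_le_level_succ (t := t) (by omega) d).1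
    rcases hρ.level_succ_or_vstate_eq (t := t) (by omega) d with h | ⟨h, hv⟩
    · omega
    · rw [hv, ih (by omega) (by omega)]

theorem vstate_eq_of_level_eq (hρ : PReconfSeq n m φ ρ (2 * m * (n + 2)) (pbP n m) (peP n m))
    (d : Fin (2 * m + 1 + 1)) {s t : ℕ} (hs : s ≤ 2 * m * (n + 2)) (ht : t ≤ 2 * m * (n + 2))
    (hl : (ρ s d).level = (ρ t d).level) : (ρ s d).vstate = (ρ t d).vstate := by
  rcases le_total s t with hst | hts
  · exact hρ.vstate_eq_of_level_eq_of_le d hst ht hl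
  · exact (hρ.vstate_eq_of_level_eq_of_le d hts hs hl.symm).symm

theorem exists_level_vstate_eq_at_one
    (hρ : PReconfSeq n m φ ρ (2 * m * (n + 2)) (pbP n m) (peP n m))
    {t : ℕ} (ht : t ≤ 2 * m * (n + 2)) (d : Fin (2 * m + 1 + 1)) (hl : 0 < (ρ t d).level) :
    ∃ s ≤ 2 * m * (n + 2), (ρ s ⟨1, by omega⟩).level = (ρ t d).level ∧
      (ρ s ⟨1, by omega⟩).vstate = (ρ t d).vstate := by
  obtain ⟨k, hk⟩ : ∃ k, (d : ℕ) = k + 1 :=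
    ⟨d - 1, by have := ((hρ.isStPath ht).interior_of_level_pos hl).1; omega⟩
  induction k generalizing t d with
  | zero => exact ⟨t, ht, by rw [show d = ⟨1, by omega⟩ from Fin.ext hk]; simp⟩
  | succ k ih =>
    have hd2 := ((hρ.isStPath ht).interior_of_level_pos hl).2
    obtain ⟨s, hst, hs, hs'⟩ := Nat.exists_eq_and_succ_eq_of_succ_le
      (f := fun s => (ρ s d).level) (t := t) (k := (ρ t d).level - 1)
      (fun s hs => (hρ.level_le_level_succ (by omega) d).2)
      (by simp only [hρ.1, level_pbP, zero_le]) (by omega)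
    have hp := hρ.isStPath (t := s) (by omega)
    have hq := hρ.isStPath (t := s + 1) (by omega)
    have hne : ρ s d ≠ ρ (s + 1) d := fun h => by simp only [h] at hs; omega
    obtain ⟨hel, hev⟩ := hp.level_vstate_left_eq_of_level_succ hq
      ((hρ.diffOne (t := s) (by omega)).apply_eq_of_apply_ne hne) hd2
      (e := ⟨k + 1, by omega⟩) (by simp) (by simp [hk]) (by omega)
    obtain ⟨s', hs'ℓ, hl', hv'⟩ := ih (t := s) (by omega) ⟨k + 1, by omega⟩ (by omega) rfl
    refine ⟨s', hs'ℓ, by omega, ?_⟩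
    rw [hv', hev, hρ.vstate_eq_of_level_eq d (by omega) ht (by omega)]

end PReconfSeq

theorem stmt5_general (n m : ℕ) (hm : 1 ≤ m) (φ : Fin m → Finset (Fin n × Bool))
    (ρ : ℕ → (Fin (2 * m + 1 + 1) → PVert n m))
    (hρ : PReconfSeq n m φ ρ (2 * m * (n + 2)) (pbP n m) (peP n m)) :
    ∀ i : Fin n,
      (∃ step ≤ 2 * m * (n + 2), ∃ (pos : Fin (2 * m + 1 + 1)) (vs cs : Bool)
          (j : Fin (2 * m)), ρ step pos = PVert.v i vs cs j) ∧
      (∀ step ≤ 2 * m * (n + 2), ∀ step' ≤ 2 * m * (n + 2),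
        ∀ (pos pos' : Fin (2 * m + 1 + 1)) (vs cs vs' cs' : Bool) (j j' : Fin (2 * m)),
          ρ step pos = PVert.v i vs cs j → ρ step' pos' = PVert.v i vs' cs' j' →
            vs = vs') := by
  intro i
  constructor
  · obtain ⟨s, hs, -, hl⟩ := Nat.exists_eq_and_succ_eq_of_succ_le
      (f := fun s => (ρ s ⟨1, by omega⟩).level) (k := i)
      (fun s hs => (hρ.level_le_level_succ hs _).2) (by simp only [hρ.1, level_pbP, zero_le])
      (by rw [hρ.2.1, level_peP (d := ⟨1, by omega⟩) le_rfl (by simp only; omega)]; omega)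
    obtain ⟨vs, cs, j, h⟩ := PVert.exists_eq_v_of_level_eq i hl
    exact ⟨s + 1, hs, _, vs, cs, j, h⟩
  · intro step hstep step' hstep' pos pos' vs cs vs' cs' j j' h h'
    obtain ⟨s, hs, hsl, hsv⟩ :=
      hρ.exists_level_vstate_eq_at_one hstep pos (by simp [h, PVert.level])
    obtain ⟨s', hs', hsl', hsv'⟩ :=
      hρ.exists_level_vstate_eq_at_one hstep' pos' (by simp [h', PVert.level])
    have hv := hρ.vstate_eq_of_level_eq _ hs hs' (by rw [hsl, hsl', h, h']; rfl)
    rwa [hsv, hsv', h, h'] at hv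

/-- if `ρ` is a reconfiguration sequence of length `2m(n+2)` from `p_b` to
`p_e` in `G_φ`, then for every level `i ∈ {1, …, n}` some path in `ρ` contains a gadget
vertex of level `i`, and all gadget vertices of level `i` contained in paths of `ρ` have
the same v-state. -/
theorem stmt5 (n m : ℕ) (hn : 1 ≤ n) (hm : 1 ≤ m) (φ : Fin m → Finset (Fin n × Bool))
    (ρ : ℕ → (Fin (2 * m + 1 + 1) → PVert n m))
    (hρ : PReconfSeq n m φ ρ (2 * m * (n + 2)) (pbP n m) (peP n m)) :
    ∀ i : Fin n,
      (∃ step ≤ 2 * m * (n + 2), ∃ (pos : Fin (2 * m + 1 + 1)) (vs cs : Bool)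
          (j : Fin (2 * m)), ρ step pos = PVert.v i vs cs j) ∧
      (∀ step ≤ 2 * m * (n + 2), ∀ step' ≤ 2 * m * (n + 2),
        ∀ (pos pos' : Fin (2 * m + 1 + 1)) (vs cs vs' cs' : Bool) (j j' : Fin (2 * m)),
          ρ step pos = PVert.v i vs cs j → ρ step' pos' = PVert.v i vs' cs' j' →
            vs = vs') :=
  stmt5_general n m hm φ ρ hρ
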